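/- For every nonzero rational c, the map φ_c(x) = 1 − (c+1)/x + c/x² has 0 as a periodic critical point of exact period 3, with orbit 0 ↦ ∞ ↦ 1 ↦ 0 on ℙ¹. Moreover, for c ∉ {1, −1}, the critical points of φ_c are exactly 0 and 2c/(c+1). -/
import Mathlib


open Polynomial

/-- The quadratic rational map `φ_c(x) = 1 − (c+1)/x + c/x²` on `ℙ¹(ℚ) = ℚ ∪ {∞}`
(`∞` encoded as `none`): `φ_c(0) = ∞` and `φ_c(∞) = 1`. -/
noncomputable def phiB (c : ℚ) : Option ℚ → Option ℚ
  | none => some 1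
  | some x => if x = 0 then none else some (1 - (c + 1)/x + c/x^2)

/-- The numerator of the derivative of the rational map `N/D`. -/
noncomputable def critNum {K : Type*} [Field K] (N D : K[X]) : K[X] :=
  derivative N * D - N * derivative D

/-- For every nonzero rational `c`, the point `0` is a critical point of
`φ_c(x) = 1 − (c+1)/x + c/x²` of exact period 3, with orbit `0 ↦ ∞ ↦ 1 ↦ 0`;
moreover for `c ∉ {1, −1}` the critical points of `φ_c` are exactly `0` and `2c/(c+1)`. -/
theorem stmt_12 (c : ℚ) (hc : c ≠ 0) :
    phiB c (some 0) = none ∧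
    phiB c none = some 1 ∧
    phiB c (some 1) = some 0 ∧
    (phiB c)^[3] (some 0) = some 0 ∧
    (∀ n : ℕ, 0 < n → n < 3 → (phiB c)^[n] (some 0) ≠ some 0) ∧
    (critNum (X^2 - C ((c : ℚ) + 1) * X + C c) (X^2 : ℚ[X])).eval 0 = 0 ∧
    (c ≠ 1 → c ≠ -1 →
      ∀ x : AlgebraicClosure ℚ,
        (critNum (X^2 - C ((c : AlgebraicClosure ℚ) + 1) * X + C (c : AlgebraicClosure ℚ))
          (X^2 : (AlgebraicClosure ℚ)[X])).eval x = 0 ↔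
          x = 0 ∨ x = 2*(c : AlgebraicClosure ℚ)/((c : AlgebraicClosure ℚ) + 1)) := by
  have h1 : phiB c (some 1) = some 0 := by
    simp [phiB]
  refine ⟨rfl, rfl, h1, ?_, ?_, ?_, ?_⟩
  · show phiB c (phiB c (phiB c (some 0))) = some 0
    simp only [phiB, if_pos rfl]
    exact h1
  · intro n h0 h3
    interval_cases n
    · simp [phiB]
    · show phiB c (phiB c (some 0)) ≠ some 0
      simp [phiB]
  · simp [critNum]
  · intro hc1 hcm1 x
    have hcc : (c : AlgebraicClosure ℚ) + 1 ≠ 0 := by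
      intro h
      apply hcm1
      have : ((c : ℚ) : AlgebraicClosure ℚ) = ((-1 : ℚ) : AlgebraicClosure ℚ) := by
        push_cast; linear_combination h
      exact_mod_cast Rat.cast_injective this
    have hev : (critNum (X^2 - C ((c : AlgebraicClosure ℚ) + 1) * X + C (c : AlgebraicClosure ℚ))
        (X^2 : (AlgebraicClosure ℚ)[X])).eval x
        = x * (((c : AlgebraicClosure ℚ) + 1) * x - 2 * (c : AlgebraicClosure ℚ)) := by
      simp [critNum]; ring
    rw [hev]
    constructor
    · rintro h
      rcases mul_eq_zero.1 h with h | h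
      · exact Or.inl h
      · right
        rw [eq_div_iff hcc]
        linear_combination h
    · rintro (rfl | rfl)
      · ring
      · rw [mul_div_cancel₀ _ hcc]
        ring
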